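/- Let r be a positive integer and let a = (a_1,…,a_r) be a tuple of positive integers, with non-decreasing rearrangement ã_1 ≤ ã_2 ≤ … ≤ ã_r. Then |𝓛*(a)| ≤ min_{0 ≤ j ≤ r} 2^{r-j} · ( ã_1 + ã_2 + … + ã_j + 1 ). -/

import Mathlib

/-!
Split the indices into a set `T` and its complement. Every subset sum is a subset sum over `T`
plus one over the complement: the former lies in `[0, ∑_{i ∈ T} a_i]`, the latter takes at most
`2 ^ #Tᶜ` values. Taking for `T` the indices of the `j` smallest entries gives the bound.
-/

open scoped BigOperators

noncomputable section

/-- The set `𝓛*(a) = { Σ_{i∈I} a_i : I ⊆ {1,…,r} }` of subset sums of `a`. -/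
def Lstar (r : ℕ) (a : Fin r → ℕ) : Finset ℕ :=
  (Finset.univ : Finset (Finset (Fin r))).image fun I => ∑ i ∈ I, a i

end

open Finset
open scoped Pointwise

section SubsetSums

variable {ι M : Type*}

/-- Unlike `Finset.subsetSum`, the summands are indexed, so equal entries of `a` count separately. -/
def subsetSums [AddCommMonoid M] [DecidableEq M] (s : Finset ι) (a : ι → M) : Finset M :=
  s.powerset.image fun I => ∑ i ∈ I, a i

theorem subsetSums_subset_add [DecidableEq ι] [AddCommMonoid M] [DecidableEq M]
    (s t : Finset ι) (a : ι → M) :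
    subsetSums s a ⊆ subsetSums (s \ t) a + subsetSums (s ∩ t) a := by
  simp only [subsetSums, subset_iff, mem_image, mem_powerset, mem_add]
  rintro _ ⟨I, hIs, rfl⟩
  exact ⟨_, ⟨I \ t, sdiff_subset_sdiff hIs le_rfl, rfl⟩,
    _, ⟨I ∩ t, inter_subset_inter_right hIs, rfl⟩,
    (add_comm _ _).trans (sum_inter_add_sum_sdiff ..)⟩

theorem card_subsetSums_le_two_pow [AddCommMonoid M] [DecidableEq M] (s : Finset ι) (a : ι → M) :
    #(subsetSums s a) ≤ 2 ^ #s :=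
  card_powerset s ▸ card_image_le

theorem card_subsetSums_le_sum_add_one (s : Finset ι) (a : ι → ℕ) :
    #(subsetSums s a) ≤ ∑ i ∈ s, a i + 1 := by
  refine (card_le_card fun x hx ↦ ?_).trans (card_range _).le
  obtain ⟨I, hI, rfl⟩ := mem_image.mp hx
  exact mem_range_succ_iff.mpr (sum_le_sum_of_subset (mem_powerset.mp hI))

theorem card_subsetSums_le_two_pow_mul [DecidableEq ι] (s t : Finset ι) (a : ι → ℕ) :
    #(subsetSums s a) ≤ 2 ^ #(s \ t) * (∑ i ∈ s ∩ t, a i + 1) :=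
  calc #(subsetSums s a)
      ≤ #(subsetSums (s \ t) a + subsetSums (s ∩ t) a) :=
        card_le_card (subsetSums_subset_add s t a)
    _ ≤ #(subsetSums (s \ t) a) * #(subsetSums (s ∩ t) a) := card_add_le
    _ ≤ 2 ^ #(s \ t) * (∑ i ∈ s ∩ t, a i + 1) :=
        Nat.mul_le_mul (card_subsetSums_le_two_pow _ a) (card_subsetSums_le_sum_add_one _ a)

end SubsetSums

theorem Lstar_card_le_general (r : ℕ) (a : Fin r → ℕ)
    (σ : Equiv.Perm (Fin r)) :
    ∀ j ≤ r,
      (Lstar r a).card ≤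
        2 ^ (r - j) *
          ((∑ i ∈ Finset.univ.filter fun i : Fin r => (i : ℕ) < j, a (σ i)) + 1) := by
  intro j hj
  set T := (univ.filter fun i : Fin r => (i : ℕ) < j).map σ.toEmbedding
  have hLstar : Lstar r a = subsetSums univ a := by rw [Lstar, subsetSums, powerset_univ]
  have hcard : #(univ \ T) = r - j := by
    rw [← compl_eq_univ_sdiff, card_compl, card_map, Fin.card_filter_val_lt, Fintype.card_fin,
      min_eq_right hj]
  have hsum : ∑ i ∈ univ ∩ T, a i = ∑ i ∈ univ.filter fun i : Fin r => (i : ℕ) < j, a (σ i) := by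
    rw [univ_inter, sum_map]
    rfl
  simpa only [hLstar, hcard, hsum] using card_subsetSums_le_two_pow_mul univ T a

theorem Lstar_card_le (r : ℕ) (hr : 0 < r) (a : Fin r → ℕ) (ha : ∀ i, 0 < a i)
    (σ : Equiv.Perm (Fin r)) (hσ : Monotone (a ∘ σ)) :
    ∀ j ≤ r,
      (Lstar r a).card ≤
        2 ^ (r - j) *
          ((∑ i ∈ Finset.univ.filter fun i : Fin r => (i : ℕ) < j, a (σ i)) + 1) :=
  Lstar_card_le_general r a σ
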